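/- (Asymptotics as y → +∞.) Let 1 ≤ i ≤ M and c = k_i + k_{N−M+i}. Then: (a) for every ε > 0 there exists Ξ such that for every ξ ≤ −Ξ there exists Y with |w_1(c·y + ξ, y) − (Σ_{j=1}^{i−1} k_j + Σ_{j=N−M+i}^{N} k_j)| < ε for all y ≥ Y; (b) for every ε > 0 there exists Ξ such that for every ξ ≥ Ξ there exists Y with |w_1(c·y + ξ, y) − (Σ_{j=1}^{i} k_j + Σ_{j=N−M+i+1}^{N} k_j)| < ε for all y ≥ Y. In other words, along x = c y + ξ with y → +∞, w_1 → Σ_{j=1}^{i−1} k_j + Σ_{j=N−M+i}^{N} k_j as ξ → −∞ and w_1 → Σ_{j=1}^{i} k_j + Σ_{j=N−M+i+1}^{N} k_j as ξ → +∞. -/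

import Mathlib

/-!
Since `∂ₓθⱼ = -kⱼ`, `w₁` is the average of `κ(S) = ∑_{j ∈ S} kⱼ` over the index sets `S`,
weighted by the terms of `τ`. Along `x = c y + ξ` the `S`-term is
`Δ(S) e^{∑ θ⁰ⱼ} e^{-κ(S) ξ} e^{g(S) y}` with
`g(S) = ∑_{j ∈ S} (kⱼ² - c kⱼ) = ∑_{j ∈ S} (kⱼ - kᵢ)(kⱼ - k_q) - M kᵢ k_q`, `q = N - M + i`.
The factor `(kⱼ - kᵢ)(kⱼ - k_q)` is positive for `j ∉ [i, q]`, nonpositive on `[i, q]` and zero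
only at `i` and `q`; as exactly `M - 1` indices lie outside `[i, q]`, `g` is maximal precisely
at `{1, …, i-1} ∪ {q, …, N}` and `{1, …, i} ∪ {q+1, …, N}`. Letting `y → ∞` kills all other
terms, and letting `ξ → ∓∞` then selects the one of these two sets with the larger, resp.
smaller, `κ`.
-/

open Filter Finset Topology Real

theorem Finset.disjoint_Icc_Icc_of_lt {α : Type*} [LinearOrder α] [LocallyFiniteOrder α]
    {a b c d : α} (h : b < c) : Disjoint (Icc a b) (Icc c d) :=
  disjoint_left.2 fun _ hx hx' => ((mem_Icc.1 hx).2.trans_lt h).not_ge (mem_Icc.1 hx').1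

theorem Finset.Icc_union_Icc_mem_powersetCard {N a b M : ℕ} (hab : a < b) (haN : a ≤ N)
    (hM : a + (N + 1 - b) = M) : Icc 1 a ∪ Icc b N ∈ powersetCard M (Icc 1 N) := by
  refine mem_powersetCard.2
    ⟨union_subset (Icc_subset_Icc_right haN) (Icc_subset_Icc_left (by omega)), ?_⟩
  rw [card_union_of_disjoint (disjoint_Icc_Icc_of_lt hab), Nat.card_Icc, Nat.card_Icc]
  omega

theorem Finset.sum_Icc_union_Icc_eq_add {β : Type*} [AddCommMonoid β] {N i q : ℕ} (f : ℕ → β)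
    (hi : 1 ≤ i) (hiq : i < q) (hqN : q ≤ N) :
    ∑ j ∈ Icc 1 (i - 1) ∪ Icc q N, f j = f q + ∑ j ∈ Icc 1 (i - 1) ∪ Icc (q + 1) N, f j ∧
      ∑ j ∈ Icc 1 i ∪ Icc (q + 1) N, f j = f i + ∑ j ∈ Icc 1 (i - 1) ∪ Icc (q + 1) N, f j := by
  have hq : Icc 1 (i - 1) ∪ Icc q N = insert q (Icc 1 (i - 1) ∪ Icc (q + 1) N) := by
    ext j; simp only [mem_insert, mem_union, mem_Icc]; omega
  have hi' : Icc 1 i ∪ Icc (q + 1) N = insert i (Icc 1 (i - 1) ∪ Icc (q + 1) N) := by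
    ext j; simp only [mem_insert, mem_union, mem_Icc]; omega
  rw [hq, hi', sum_insert (by simp only [mem_union, mem_Icc]; omega),
    sum_insert (by simp only [mem_union, mem_Icc]; omega)]
  exact ⟨rfl, rfl⟩

section SumCompare

variable {ι β : Type*} [DecidableEq ι] [AddCommGroup β] [LinearOrder β] [IsOrderedAddMonoid β]
  {s t : Finset ι} {f : ι → β}

theorem Finset.sum_le_sum_of_nonneg_of_nonpos_sdiff (ht : ∀ j ∈ t, 0 ≤ f j)
    (hs : ∀ j ∈ s \ t, f j ≤ 0) : ∑ j ∈ s, f j ≤ ∑ j ∈ t, f j := by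
  calc ∑ j ∈ s, f j = ∑ j ∈ s ∩ t, f j + ∑ j ∈ s \ t, f j := (sum_inter_add_sum_sdiff _ _ _).symm
    _ ≤ ∑ j ∈ t, f j + 0 :=
      add_le_add (sum_le_sum_of_subset_of_nonneg inter_subset_right fun j hj _ => ht j hj)
        (sum_nonpos hs)
    _ = ∑ j ∈ t, f j := add_zero _

theorem Finset.subset_of_sum_eq_of_pos_of_nonpos_sdiff (ht : ∀ j ∈ t, 0 < f j)
    (hs : ∀ j ∈ s \ t, f j ≤ 0) (h : ∑ j ∈ s, f j = ∑ j ∈ t, f j) :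
    t ⊆ s ∧ ∀ j ∈ s \ t, f j = 0 := by
  have hsplit : ∑ j ∈ t \ s, f j = ∑ j ∈ s \ t, f j := by
    have hs' := sum_inter_add_sum_sdiff s t f
    have ht' := sum_inter_add_sum_sdiff t s f
    rw [inter_comm, h, ← ht'] at hs'
    exact (add_left_cancel hs').symm
  have hnonneg : 0 ≤ ∑ j ∈ t \ s, f j := sum_nonneg fun j hj => (ht j (mem_sdiff.1 hj).1).le
  have hzero : ∑ j ∈ s \ t, f j = 0 := le_antisymm (sum_nonpos hs) (hsplit ▸ hnonneg)
  refine ⟨fun a ha => by_contra fun has => ?_, (sum_eq_zero_iff_of_nonpos hs).1 hzero⟩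
  have hpos := sum_pos (fun j hj => ht j (mem_sdiff.1 hj).1) ⟨a, mem_sdiff.2 ⟨ha, has⟩⟩
  exact hpos.ne' (hsplit.trans hzero)

end SumCompare

section CenterMass

variable {ι E : Type*} [NormedAddCommGroup E] [NormedSpace ℝ E]

theorem Finset.tendsto_centerMass {α : Type*} {l : Filter α} {s : Finset ι}
    {w : α → ι → ℝ} {w₀ : ι → ℝ} (z : ι → E)
    (hw : ∀ S ∈ s, Tendsto (fun a => w a S) l (𝓝 (w₀ S))) (hw₀ : ∑ S ∈ s, w₀ S ≠ 0) :
    Tendsto (fun a => s.centerMass (w a) z) l (𝓝 (s.centerMass w₀ z)) :=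
  ((tendsto_finsetSum s hw).inv₀ hw₀).smul
    (tendsto_finsetSum s fun S hS => (hw S hS).smul_const (z S))

theorem tendsto_exp_mul_atTop_of_nonpos {a : ℝ} (ha : a ≤ 0) :
    Tendsto (fun t => exp (a * t)) atTop (𝓝 (if a = 0 then 1 else 0)) := by
  split_ifs with h
  · simp [h]
  · exact tendsto_exp_atBot.comp (tendsto_id.const_mul_atTop_of_neg (lt_of_le_of_ne ha h))

theorem Finset.tendsto_centerMass_exp_mul_atTop {s : Finset ι} {d g : ι → ℝ} (z : ι → E)
    {S₀ : ι} (h₀ : S₀ ∈ s) (hd : ∀ S ∈ s, 0 < d S) (hg : ∀ S ∈ s, g S ≤ g S₀) :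
    Tendsto (fun t => s.centerMass (fun S => d S * exp (g S * t)) z) atTop
      (𝓝 ({S ∈ s | g S = g S₀}.centerMass d z)) := by
  classical
  set d₀ : ι → ℝ := fun S => if g S = g S₀ then d S else 0
  have hrescale : ∀ t, s.centerMass (fun S => d S * exp (g S * t)) z =
      s.centerMass (fun S => d S * exp ((g S - g S₀) * t)) z := fun t => by
    rw [← centerMass_smul_left s z (exp_ne_zero (g S₀ * t))
      (w := fun S => d S * exp ((g S - g S₀) * t))]
    congr 1
    ext S
    rw [Pi.smul_apply, smul_eq_mul, mul_left_comm, ← exp_add]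
    ring_nf
  have hlim : ∀ S ∈ s, Tendsto (fun t => d S * exp ((g S - g S₀) * t)) atTop (𝓝 (d₀ S)) := by
    intro S hS
    have := (tendsto_exp_mul_atTop_of_nonpos (sub_nonpos.2 (hg S hS))).const_mul (d S)
    simpa only [sub_eq_zero, d₀, mul_ite, mul_one, mul_zero] using this
  have hfilter : {S ∈ s | g S = g S₀}.centerMass d z = s.centerMass d₀ z := by
    rw [centerMass_congr_weights fun S hS => (if_pos (mem_filter.1 hS).2).symm]
    exact centerMass_subset z (filter_subset _ _) fun S hS hS' =>
      if_neg fun h => hS' (mem_filter.2 ⟨hS, h⟩)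
  have hsum : ∑ S ∈ s, d₀ S ≠ 0 := by
    rw [← sum_filter]
    exact (sum_pos (fun S hS => hd S (mem_filter.1 hS).1) ⟨S₀, mem_filter.2 ⟨h₀, rfl⟩⟩ :
      0 < ∑ S ∈ s with g S = g S₀, d S).ne'
  simp_rw [hrescale, hfilter]
  exact tendsto_centerMass z hlim hsum

theorem Finset.tendsto_centerMass_exp_mul_atTop_of_isMax {s : Finset ι} {d g : ι → ℝ} (z : ι → E)
    {S₀ : ι} (h₀ : S₀ ∈ s) (hd : ∀ S ∈ s, 0 < d S) (hg : ∀ S ∈ s, S ≠ S₀ → g S < g S₀) :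
    Tendsto (fun t => s.centerMass (fun S => d S * exp (g S * t)) z) atTop (𝓝 (z S₀)) := by
  classical
  have hmax : {S ∈ s | g S = g S₀} = {S₀} := by
    ext S
    simp only [mem_filter, mem_singleton]
    refine ⟨fun ⟨hS, h⟩ => by_contra fun hne => (hg S hS hne).ne h, ?_⟩
    rintro rfl
    exact ⟨h₀, rfl⟩
  have := tendsto_centerMass_exp_mul_atTop z h₀ hd fun S hS =>
    if h : S = S₀ then h ▸ le_rfl else (hg S hS h).le
  rwa [hmax, centerMass_singleton _ _ (hd S₀ h₀).ne'] at this

end CenterMass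

theorem eventually_exists_forall_ge_mem_of_tendsto {α β X : Type*} [TopologicalSpace X]
    [Nonempty β] [SemilatticeSup β] {l : Filter α} {F : α → β → X} {A : α → X} {L : X} {U : Set X}
    (hF : ∀ a, Tendsto (F a) atTop (𝓝 (A a))) (hA : Tendsto A l (𝓝 L)) (hU : IsOpen U)
    (hL : L ∈ U) : ∀ᶠ a in l, ∃ Y, ∀ y ≥ Y, F a y ∈ U := by
  filter_upwards [hA (hU.mem_nhds hL)] with a ha
  exact eventually_atTop.1 ((hF a) (hU.mem_nhds ha))

theorem Finset.centerMass_exp_mul_iterated_limits {ι : Type*} [DecidableEq ι] {s : Finset ι}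
    {d g κ : ι → ℝ} {S₁ S₂ : ι} (hS₁ : S₁ ∈ s) (hd : ∀ S ∈ s, 0 < d S)
    (hg : ∀ S ∈ s, g S ≤ g S₁) (htop : {S ∈ s | g S = g S₁} = {S₁, S₂}) (hκ : κ S₂ < κ S₁) :
    (∀ ε > (0 : ℝ), ∃ Ξ : ℝ, ∀ ξ ≤ -Ξ, ∃ Y : ℝ, ∀ y ≥ Y,
        |s.centerMass (fun S => d S * exp (-κ S * ξ) * exp (g S * y)) κ - κ S₁| < ε) ∧
    (∀ ε > (0 : ℝ), ∃ Ξ : ℝ, ∀ ξ ≥ Ξ, ∃ Y : ℝ, ∀ y ≥ Y,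
        |s.centerMass (fun S => d S * exp (-κ S * ξ) * exp (g S * y)) κ - κ S₂| < ε) := by
  have hinner : ∀ ξ, Tendsto
      (fun y => s.centerMass (fun S => d S * exp (-κ S * ξ) * exp (g S * y)) κ) atTop
      (𝓝 (({S₁, S₂} : Finset ι).centerMass (fun S => d S * exp (-κ S * ξ)) κ)) := fun ξ =>
    htop ▸ tendsto_centerMass_exp_mul_atTop κ hS₁ (fun S hS => mul_pos (hd S hS) (exp_pos _)) hg
  have hpair : ∀ S ∈ ({S₁, S₂} : Finset ι), 0 < d S := fun S hS =>
    hd S (mem_filter.1 (htop ▸ hS)).1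
  have hplus := tendsto_centerMass_exp_mul_atTop_of_isMax (g := fun S => -κ S) κ
    (mem_insert_of_mem (mem_singleton_self S₂)) hpair fun S hS hne => by
      obtain rfl : S = S₁ := by simpa [hne] using hS
      exact neg_lt_neg hκ
  have hminus := (tendsto_centerMass_exp_mul_atTop_of_isMax (g := κ) κ
    (mem_insert_self S₁ {S₂}) hpair fun S hS hne => by
      obtain rfl : S = S₂ := by simpa [hne] using hS
      exact hκ).comp tendsto_neg_atBot_atTop
  simp only [Function.comp_def, mul_neg, ← neg_mul] at hminus
  refine ⟨fun ε hε => ?_, fun ε hε => ?_⟩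
  · obtain ⟨Ξ, hΞ⟩ := eventually_atBot.1 (eventually_exists_forall_ge_mem_of_tendsto hinner hminus
      Metric.isOpen_ball (Metric.mem_ball_self hε))
    exact ⟨-Ξ, fun ξ hξ => hΞ ξ (by linarith)⟩
  · exact eventually_atTop.1 (eventually_exists_forall_ge_mem_of_tendsto hinner hplus
      Metric.isOpen_ball (Metric.mem_ball_self hε))

section DominantSets

variable {k : ℕ → ℝ} {N i q : ℕ}

theorem sub_mul_sub_pos_of_mem_union (hk : StrictMonoOn k (Set.Icc 1 N)) (hi : 1 ≤ i)
    (hiq : i ≤ q) (hqN : q ≤ N) {j : ℕ} (hj : j ∈ Icc 1 (i - 1) ∪ Icc (q + 1) N) :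
    0 < (k j - k i) * (k j - k q) := by
  simp only [mem_union, mem_Icc] at hj
  rcases hj with ⟨h1, h2⟩ | ⟨h1, h2⟩
  · have hji : k j < k i := hk ⟨h1, by omega⟩ ⟨hi, by omega⟩ (by omega)
    have hjq : k j < k q := hk ⟨h1, by omega⟩ ⟨by omega, hqN⟩ (by omega)
    exact mul_pos_of_neg_of_neg (sub_neg.2 hji) (sub_neg.2 hjq)
  · have hij : k i < k j := hk ⟨hi, by omega⟩ ⟨by omega, h2⟩ (by omega)
    have hqj : k q < k j := hk ⟨by omega, hqN⟩ ⟨by omega, h2⟩ (by omega)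
    exact mul_pos (sub_pos.2 hij) (sub_pos.2 hqj)

theorem sub_mul_sub_nonpos_of_mem_Icc (hk : StrictMonoOn k (Set.Icc 1 N)) (hi : 1 ≤ i)
    (hqN : q ≤ N) {j : ℕ} (hj : j ∈ Icc i q) : (k j - k i) * (k j - k q) ≤ 0 := by
  rw [mem_Icc] at hj
  exact mul_nonpos_of_nonneg_of_nonpos
    (sub_nonneg.2 (hk.monotoneOn ⟨hi, by omega⟩ ⟨by omega, by omega⟩ hj.1))
    (sub_nonpos.2 (hk.monotoneOn ⟨by omega, by omega⟩ ⟨by omega, hqN⟩ hj.2))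

theorem eq_or_eq_of_sub_mul_sub_eq_zero (hk : StrictMonoOn k (Set.Icc 1 N)) (hi : 1 ≤ i)
    (hqN : q ≤ N) {j : ℕ} (hj : j ∈ Icc i q) (h : (k j - k i) * (k j - k q) = 0) :
    j = i ∨ j = q := by
  rw [mem_Icc] at hj
  rcases mul_eq_zero.1 h with h | h
  · exact .inl (hk.injOn ⟨by omega, by omega⟩ ⟨hi, by omega⟩ (sub_eq_zero.1 h))
  · exact .inr (hk.injOn ⟨by omega, by omega⟩ ⟨by omega, hqN⟩ (sub_eq_zero.1 h))

theorem sum_sub_mul_sub_le (hk : StrictMonoOn k (Set.Icc 1 N)) (hi : 1 ≤ i) (hiq : i ≤ q)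
    (hqN : q ≤ N) {S : Finset ℕ} (hS : S ⊆ Icc 1 N) :
    ∑ j ∈ S, (k j - k i) * (k j - k q) ≤
      ∑ j ∈ Icc 1 (i - 1) ∪ Icc (q + 1) N, (k j - k i) * (k j - k q) := by
  refine sum_le_sum_of_nonneg_of_nonpos_sdiff
    (fun j hj => (sub_mul_sub_pos_of_mem_union hk hi hiq hqN hj).le) ?_
  intro j hj
  obtain ⟨hjS, hjP⟩ := mem_sdiff.1 hj
  have hjN := mem_Icc.1 (hS hjS)
  simp only [mem_union, mem_Icc] at hjP
  exact sub_mul_sub_nonpos_of_mem_Icc hk hi hqN (mem_Icc.2 (by omega))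

theorem eq_or_eq_of_sum_sub_mul_sub_eq (hk : StrictMonoOn k (Set.Icc 1 N)) (hi : 1 ≤ i)
    (hiq : i < q) (hqN : q ≤ N) {M : ℕ} (hMq : M + q = N + i) {S : Finset ℕ}
    (hS : S ∈ powersetCard M (Icc 1 N))
    (h : ∑ j ∈ S, (k j - k i) * (k j - k q) =
      ∑ j ∈ Icc 1 (i - 1) ∪ Icc (q + 1) N, (k j - k i) * (k j - k q)) :
    S = Icc 1 (i - 1) ∪ Icc q N ∨ S = Icc 1 i ∪ Icc (q + 1) N := by
  set P := Icc 1 (i - 1) ∪ Icc (q + 1) N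
  obtain ⟨hSN, hcard⟩ := mem_powersetCard.1 hS
  have hSP : ∀ j ∈ S \ P, j ∈ Icc i q := fun j hj => by
    obtain ⟨hjS, hjP⟩ := mem_sdiff.1 hj
    have hjN := mem_Icc.1 (hSN hjS)
    simp only [P, mem_union, mem_Icc] at hjP ⊢
    omega
  obtain ⟨hPS, hzero⟩ := subset_of_sum_eq_of_pos_of_nonpos_sdiff
    (fun j hj => sub_mul_sub_pos_of_mem_union hk hi hiq.le hqN hj)
    (fun j hj => sub_mul_sub_nonpos_of_mem_Icc hk hi hqN (hSP j hj)) h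
  have hPcard : #P = M - 1 := by
    rw [card_union_of_disjoint (disjoint_Icc_Icc_of_lt (by omega)), Nat.card_Icc, Nat.card_Icc]
    omega
  obtain ⟨a, ha⟩ : ∃ a, S \ P = {a} :=
    card_eq_one.1 (by rw [card_sdiff_of_subset hPS, hcard, hPcard]; omega)
  have haS : a ∈ S \ P := ha ▸ mem_singleton_self a
  have hS_eq : S = insert a P := by rw [insert_eq, ← ha, sdiff_union_of_subset hPS]
  rcases eq_or_eq_of_sub_mul_sub_eq_zero hk hi hqN (hSP a haS) (hzero a haS) with rfl | rfl
  · right; rw [hS_eq]; ext j; simp only [P, mem_insert, mem_union, mem_Icc]; omega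
  · left; rw [hS_eq]; ext j; simp only [P, mem_insert, mem_union, mem_Icc]; omega

theorem sum_sq_sub_mul_eq (S : Finset ℕ) :
    ∑ j ∈ S, (k j ^ 2 - (k i + k q) * k j) =
      ∑ j ∈ S, (k j - k i) * (k j - k q) - #S * (k i * k q) := by
  rw [← nsmul_eq_mul, ← sum_const, ← sum_sub_distrib]
  exact sum_congr rfl fun j _ => by ring

theorem sum_sq_sub_mul_le (hk : StrictMonoOn k (Set.Icc 1 N)) (hi : 1 ≤ i) (hiq : i < q)
    (hqN : q ≤ N) {M : ℕ} (hMq : M + q = N + i) {S : Finset ℕ}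
    (hS : S ∈ powersetCard M (Icc 1 N)) :
    ∑ j ∈ S, (k j ^ 2 - (k i + k q) * k j) ≤
      ∑ j ∈ Icc 1 (i - 1) ∪ Icc q N, (k j ^ 2 - (k i + k q) * k j) := by
  have hSm := Icc_union_Icc_mem_powersetCard (a := i - 1) (b := q) (N := N) (by omega) (by omega)
    (by omega : i - 1 + (N + 1 - q) = M)
  rw [sum_sq_sub_mul_eq, sum_sq_sub_mul_eq, (mem_powersetCard.1 hS).2, (mem_powersetCard.1 hSm).2,
    (sum_Icc_union_Icc_eq_add _ hi hiq hqN).1, sub_self, mul_zero, zero_add]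
  exact sub_le_sub_right (sum_sub_mul_sub_le hk hi hiq.le hqN (mem_powersetCard.1 hS).1) _

theorem filter_sum_sq_sub_mul_eq (hk : StrictMonoOn k (Set.Icc 1 N)) (hi : 1 ≤ i) (hiq : i < q)
    (hqN : q ≤ N) {M : ℕ} (hMq : M + q = N + i) :
    {S ∈ powersetCard M (Icc 1 N) | ∑ j ∈ S, (k j ^ 2 - (k i + k q) * k j) =
      ∑ j ∈ Icc 1 (i - 1) ∪ Icc q N, (k j ^ 2 - (k i + k q) * k j)} =
      {Icc 1 (i - 1) ∪ Icc q N, Icc 1 i ∪ Icc (q + 1) N} := by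
  have hSm := Icc_union_Icc_mem_powersetCard (a := i - 1) (b := q) (N := N) (by omega) (by omega)
    (by omega : i - 1 + (N + 1 - q) = M)
  have hSp := Icc_union_Icc_mem_powersetCard (a := i) (b := q + 1) (N := N) (by omega) (by omega)
    (by omega : i + (N + 1 - (q + 1)) = M)
  obtain ⟨hfSm, hfSp⟩ := sum_Icc_union_Icc_eq_add (fun j => (k j - k i) * (k j - k q)) hi hiq hqN
  simp only [sub_self, mul_zero, zero_mul, zero_add] at hfSm hfSp
  have hrate : ∀ S ∈ powersetCard M (Icc 1 N),
      ∑ j ∈ S, (k j ^ 2 - (k i + k q) * k j) =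
          ∑ j ∈ Icc 1 (i - 1) ∪ Icc q N, (k j ^ 2 - (k i + k q) * k j) ↔
        ∑ j ∈ S, (k j - k i) * (k j - k q) =
          ∑ j ∈ Icc 1 (i - 1) ∪ Icc (q + 1) N, (k j - k i) * (k j - k q) := fun S hS => by
    rw [sum_sq_sub_mul_eq, sum_sq_sub_mul_eq, (mem_powersetCard.1 hS).2,
      (mem_powersetCard.1 hSm).2, hfSm, sub_left_inj]
  ext S
  simp only [mem_filter, mem_insert, mem_singleton]
  constructor
  · rintro ⟨hS, h⟩
    exact eq_or_eq_of_sum_sub_mul_sub_eq hk hi hiq hqN hMq hS ((hrate S hS).1 h)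
  · rintro (rfl | rfl)
    · exact ⟨hSm, rfl⟩
    · exact ⟨hSp, (hrate _ hSp).2 hfSp⟩

end DominantSets

theorem prod_prod_filter_lt_sub_sq_pos {ι : Type*} [LinearOrder ι] {k : ι → ℝ} {S : Finset ι}
    (hk : Set.InjOn k S) : 0 < ∏ j ∈ S, ∏ l ∈ S with j < l, (k j - k l) ^ 2 :=
  prod_pos fun _ hj => prod_pos fun _ hl =>
    sq_pos_of_ne_zero (sub_ne_zero.2 fun h => (mem_filter.1 hl).2.ne (hk hj (mem_filter.1 hl).1 h))

theorem hasDerivAt_sum_mul_exp_sum {ι : Type*} {s : Finset (Finset ι)} (a : Finset ι → ℝ)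
    {φ : ι → ℝ → ℝ} {φ' : ι → ℝ} {x : ℝ} (hφ : ∀ j, HasDerivAt (φ j) (φ' j) x) :
    HasDerivAt (fun x => ∑ S ∈ s, a S * exp (∑ j ∈ S, φ j x))
      (∑ S ∈ s, (∑ j ∈ S, φ' j) * (a S * exp (∑ j ∈ S, φ j x))) x :=
  HasDerivAt.fun_sum fun S _ =>
    ((HasDerivAt.fun_sum fun j _ => hφ j).exp.const_mul (a S)).congr_deriv (by ring)

theorem neg_deriv_sum_mul_exp_sum_div {ι : Type*} {s : Finset (Finset ι)} (a : Finset ι → ℝ)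
    {φ : ι → ℝ → ℝ} {k : ι → ℝ} {x : ℝ} (hφ : ∀ j, HasDerivAt (φ j) (-k j) x) :
    -deriv (fun x => ∑ S ∈ s, a S * exp (∑ j ∈ S, φ j x)) x /
        ∑ S ∈ s, a S * exp (∑ j ∈ S, φ j x) =
      s.centerMass (fun S => a S * exp (∑ j ∈ S, φ j x)) fun S => ∑ j ∈ S, k j := by
  rw [(hasDerivAt_sum_mul_exp_sum a hφ).deriv, centerMass, smul_eq_mul, div_eq_inv_mul]
  simp only [sum_neg_distrib, neg_mul, neg_neg, smul_eq_mul, mul_comm]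

theorem sum_neg_mul_add_sq_mul_add (S : Finset ℕ) (k θ0 : ℕ → ℝ) (c ξ y : ℝ) :
    ∑ j ∈ S, (-k j * (c * y + ξ) + k j ^ 2 * y + θ0 j) =
      ∑ j ∈ S, θ0 j + (-(∑ j ∈ S, k j) * ξ + (∑ j ∈ S, (k j ^ 2 - c * k j)) * y) := by
  rw [neg_mul, sum_mul, sum_mul, ← sum_neg_distrib, ← sum_add_distrib, ← sum_add_distrib]
  exact sum_congr rfl fun j _ => by ring

theorem w1_line_eq_centerMass {N M : ℕ} {k θ0 : ℕ → ℝ} {θ : ℕ → ℝ → ℝ → ℝ}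
    (hθ : ∀ i x y, θ i x y = -(k i) * x + (k i) ^ 2 * y + θ0 i) {Δ : Finset ℕ → ℝ}
    {τ : ℝ → ℝ → ℝ} (hτ : ∀ x y, τ x y = ∑ S ∈ powersetCard M (Icc 1 N),
      Δ S * exp (∑ j ∈ S, θ j x y))
    {w1 : ℝ → ℝ → ℝ} (hw1 : ∀ x y, w1 x y = -(deriv (fun x' => τ x' y) x) / τ x y)
    (c ξ y : ℝ) :
    w1 (c * y + ξ) y = (powersetCard M (Icc 1 N)).centerMass
      (fun S => Δ S * exp (∑ j ∈ S, θ0 j) * exp (-(∑ j ∈ S, k j) * ξ) *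
        exp ((∑ j ∈ S, (k j ^ 2 - c * k j)) * y))
      fun S => ∑ j ∈ S, k j := by
  have hθx : ∀ j, HasDerivAt (fun x => θ j x y) (-k j) (c * y + ξ) := fun j => by
    simp only [hθ]
    simpa using ((hasDerivAt_id _).const_mul (-k j)).add_const (k j ^ 2 * y + θ0 j)
  rw [hw1, show (fun x => τ x y) = _ from funext fun x => hτ x y, hτ,
    neg_deriv_sum_mul_exp_sum_div _ hθx]
  refine centerMass_congr_weights fun S _ => ?_
  simp only [hθ, sum_neg_mul_add_sq_mul_add, exp_add]
  ring

theorem w1_asymptotics_y_to_pos_infty_general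
    (N : ℕ)
    (M : ℕ) (hM2 : M ≤ N - 1)
    (k θ0 : ℕ → ℝ)
    (hk : ∀ a b, 1 ≤ a → a < b → b ≤ N → k a < k b)
    (θ : ℕ → ℝ → ℝ → ℝ)
    (hθ : ∀ i x y, θ i x y = -(k i) * x + (k i) ^ 2 * y + θ0 i)
    (Δ : Finset ℕ → ℝ)
    (hΔ : ∀ S, Δ S = ∏ j ∈ S, ∏ l ∈ S.filter (fun l => j < l), (k j - k l) ^ 2)
    (τ : ℝ → ℝ → ℝ)
    (hτ : ∀ x y, τ x y = ∑ S ∈ Finset.powersetCard M (Finset.Icc 1 N),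
        Δ S * Real.exp (∑ j ∈ S, θ j x y))
    (w1 : ℝ → ℝ → ℝ)
    (hw1 : ∀ x y, w1 x y = -(deriv (fun x' => τ x' y) x) / τ x y)
    (i : ℕ) (hi1 : 1 ≤ i) (hi2 : i ≤ M)
    (c : ℝ) (hc : c = k i + k (N - M + i)) :
    (∀ ε > (0 : ℝ), ∃ Ξ : ℝ, ∀ ξ ≤ -Ξ, ∃ Y : ℝ, ∀ y ≥ Y,
        |w1 (c * y + ξ) y -
          ((∑ j ∈ Finset.Icc 1 (i - 1), k j) + ∑ j ∈ Finset.Icc (N - M + i) N, k j)| < ε) ∧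
    (∀ ε > (0 : ℝ), ∃ Ξ : ℝ, ∀ ξ ≥ Ξ, ∃ Y : ℝ, ∀ y ≥ Y,
        |w1 (c * y + ξ) y -
          ((∑ j ∈ Finset.Icc 1 i, k j) + ∑ j ∈ Finset.Icc (N - M + i + 1) N, k j)| < ε) := by
  subst hc
  set q := N - M + i
  have hk' : StrictMonoOn k (Set.Icc 1 N) := fun a ha b hb hab => hk a b ha.1 hab hb.2
  have hiq : i < q := by omega
  have hqN : q ≤ N := by omega
  have hMq : M + q = N + i := by omega
  have hD : ∀ S ∈ powersetCard M (Icc 1 N), 0 < Δ S * exp (∑ j ∈ S, θ0 j) := fun S hS => by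
    refine mul_pos ?_ (exp_pos _)
    rw [hΔ]
    exact prod_prod_filter_lt_sub_sq_pos (hk'.injOn.mono
      (by simpa [← coe_Icc] using (mem_powersetCard.1 hS).1))
  obtain ⟨hκSm, hκSp⟩ := sum_Icc_union_Icc_eq_add k hi1 hiq hqN
  simp_rw [w1_line_eq_centerMass hθ hτ hw1,
    ← sum_union (disjoint_Icc_Icc_of_lt (by omega : i - 1 < q)),
    ← sum_union (disjoint_Icc_Icc_of_lt (by omega : i < q + 1))]
  exact centerMass_exp_mul_iterated_limits
    (Icc_union_Icc_mem_powersetCard (by omega) (by omega) (by omega)) hD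
    (fun S hS => sum_sq_sub_mul_le hk' hi1 hiq hqN hMq hS)
    (filter_sum_sq_sub_mul_eq hk' hi1 hiq hqN hMq)
    (by rw [hκSm, hκSp]; exact add_lt_add_left (hk' ⟨hi1, by omega⟩ ⟨by omega, hqN⟩ hiq) _)

/-- asymptotics as y → +∞: along x = c y + ξ with
c = k_i + k_{N−M+i} (1 ≤ i ≤ M), the function w₁ = −(∂_x τ_M)/τ_M satisfies:
(a) w₁ → Σ_{j=1}^{i−1} k_j + Σ_{j=N−M+i}^{N} k_j as ξ → −∞ and
(b) w₁ → Σ_{j=1}^{i} k_j + Σ_{j=N−M+i+1}^{N} k_j as ξ → +∞,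
where the limits are taken as y → +∞. -/
theorem w1_asymptotics_y_to_pos_infty
    (N : ℕ) (hN : 2 ≤ N)
    (M : ℕ) (hM1 : 1 ≤ M) (hM2 : M ≤ N - 1)
    (k θ0 : ℕ → ℝ)
    (hk : ∀ a b, 1 ≤ a → a < b → b ≤ N → k a < k b)
    (θ : ℕ → ℝ → ℝ → ℝ)
    (hθ : ∀ i x y, θ i x y = -(k i) * x + (k i) ^ 2 * y + θ0 i)
    (Δ : Finset ℕ → ℝ)
    (hΔ : ∀ S, Δ S = ∏ j ∈ S, ∏ l ∈ S.filter (fun l => j < l), (k j - k l) ^ 2)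
    (τ : ℝ → ℝ → ℝ)
    (hτ : ∀ x y, τ x y = ∑ S ∈ Finset.powersetCard M (Finset.Icc 1 N),
        Δ S * Real.exp (∑ j ∈ S, θ j x y))
    (w1 : ℝ → ℝ → ℝ)
    (hw1 : ∀ x y, w1 x y = -(deriv (fun x' => τ x' y) x) / τ x y)
    (i : ℕ) (hi1 : 1 ≤ i) (hi2 : i ≤ M)
    (c : ℝ) (hc : c = k i + k (N - M + i)) :
    (∀ ε > (0 : ℝ), ∃ Ξ : ℝ, ∀ ξ ≤ -Ξ, ∃ Y : ℝ, ∀ y ≥ Y,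
        |w1 (c * y + ξ) y -
          ((∑ j ∈ Finset.Icc 1 (i - 1), k j) + ∑ j ∈ Finset.Icc (N - M + i) N, k j)| < ε) ∧
    (∀ ε > (0 : ℝ), ∃ Ξ : ℝ, ∀ ξ ≥ Ξ, ∃ Y : ℝ, ∀ y ≥ Y,
        |w1 (c * y + ξ) y -
          ((∑ j ∈ Finset.Icc 1 i, k j) + ∑ j ∈ Finset.Icc (N - M + i + 1) N, k j)| < ε) :=
  w1_asymptotics_y_to_pos_infty_general N M hM2 k θ0 hk θ hθ Δ hΔ τ hτ w1 hw1 i hi1 hi2 c hc
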